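/- arXiv:2512.19721 — 2 statements merged into one kernel-verified Lean document; each statement's English description precedes it below -/
import Mathlib

section
/- The peak-to-peak distance is of negative type: for any finite collection A₁,…,A_m ∈ ℝⁿ and any real coefficients c₁,…,c_m with Σᵢ cᵢ = 0, one has Σᵢ Σⱼ cᵢ cⱼ d_peak(Aᵢ, Aⱼ) ≤ 0. -/
open Finset

/-- Sign-aware intersection `N(A,B) = Σ_{i : AᵢBᵢ > 0} min |Aᵢ| |Bᵢ|`. -/
noncomputable def Npeak {n : ℕ} (A B : Fin n → ℝ) : ℝ :=
  ∑ i ∈ Finset.univ.filter (fun i => 0 < A i * B i), min |A i| |B i|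

/-- Peak-to-peak union `U_peak(A,B) = Σᵢ (max Aᵢ⁺ Bᵢ⁺ + max Aᵢ⁻ Bᵢ⁻)`. -/
noncomputable def Upeak {n : ℕ} (A B : Fin n → ℝ) : ℝ :=
  ∑ i, (max (max (A i) 0) (max (B i) 0) + max (max (-(A i)) 0) (max (-(B i)) 0))

/-- Peak-to-peak similarity `J_peak = N/U_peak` (and `1` when `U_peak = 0`). -/
noncomputable def Jpeak {n : ℕ} (A B : Fin n → ℝ) : ℝ :=
  if 0 < Upeak A B then Npeak A B / Upeak A B else 1

/-- Peak-to-peak distance `d_peak = 1 − J_peak`. -/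
noncomputable def dpeak {n : ℕ} (A B : Fin n → ℝ) : ℝ := 1 - Jpeak A B

/-!
Splitting every coordinate into its positive and negative part, `Npeak A B` is a sum of
min-kernels `min (u i) (u j) = ∫ 1[0,u i] 1[0,u j]`, so the matrix `N i j = Npeak (A i) (A j)` is
positive semidefinite, and `Upeak A B = Npeak A A + Npeak B B - Npeak A B`: `Jpeak` is the
Tanimoto kernel of `N`. With `a i = N i i`, the matrix `r i j = N i j / (a i + a j)` is the Schur
product of `N` with the Cauchy matrix `(a i + a j)⁻¹ = ∫₀^∞ e^{-a i t} e^{-a j t} dt`, hence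
positive semidefinite, and `|r i j| ≤ 1/2` by Cauchy–Schwarz. The Tanimoto kernel equals
`r / (1 - r) = ∑_{k ≥ 1} r ^ k` (entrywise powers, positive semidefinite by Schur again), plus the
all-ones block on the indices with `a i = 0`. Hence `∑ cᵢ cⱼ Jpeak (Aᵢ, Aⱼ) ≥ 0`, and
`∑ cᵢ cⱼ dpeak (Aᵢ, Aⱼ) = (∑ cᵢ)² - ∑ cᵢ cⱼ Jpeak (Aᵢ, Aⱼ) ≤ 0`.
-/

open MeasureTheory
open scoped ComplexOrder

namespace Matrix

variable {ι : Type*}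

theorem posSemidef_iff_sum_mul_mul_nonneg [Fintype ι] {M : Matrix ι ι ℝ} :
    M.PosSemidef ↔ M.IsHermitian ∧ ∀ c : ι → ℝ, 0 ≤ ∑ i, ∑ j, c i * c j * M i j := by
  have (c : ι → ℝ) : star c ⬝ᵥ (M *ᵥ c) = ∑ i, ∑ j, c i * c j * M i j := by
    simp only [dotProduct, mulVec, star_trivial, Finset.mul_sum]
    exact Finset.sum_congr rfl fun i _ => Finset.sum_congr rfl fun j _ => by ring
  simp_rw [posSemidef_iff_dotProduct_mulVec, this]

theorem posSemidef_of_integral_mul [Fintype ι] {α : Type*} [MeasurableSpace α] (μ : Measure α)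
    (f : ι → α → ℝ) (hf : ∀ i j, Integrable (fun x => f i x * f j x) μ) :
    (of fun i j => ∫ x, f i x * f j x ∂μ).PosSemidef := by
  refine posSemidef_iff_sum_mul_mul_nonneg.2 ⟨IsHermitian.ext fun i j => ?_, fun c => ?_⟩
  · simp only [of_apply, star_trivial, mul_comm]
  · have hcf (i j : ι) : Integrable (fun x => c i * c j * (f i x * f j x)) μ :=
      (hf i j).const_mul _
    calc 0 ≤ ∫ x, (∑ i, c i * f i x) ^ 2 ∂μ := integral_nonneg fun x => sq_nonneg _
      _ = ∫ x, ∑ i, ∑ j, c i * c j * (f i x * f j x) ∂μ := by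
        congr 1 with x
        rw [sq, Finset.sum_mul_sum]
        exact Finset.sum_congr rfl fun i _ => Finset.sum_congr rfl fun j _ => by ring
      _ = ∑ i, ∑ j, c i * c j * of (fun i j => ∫ x, f i x * f j x ∂μ) i j := by
        rw [integral_finsetSum _ fun i _ => integrable_finsetSum _ fun j _ => hcf i j]
        refine Finset.sum_congr rfl fun i _ => ?_
        rw [integral_finsetSum _ fun j _ => hcf i j]
        exact Finset.sum_congr rfl fun j _ => integral_const_mul _ _

theorem posSemidef_min [Fintype ι] {u : ι → ℝ} (hu : ∀ i, 0 ≤ u i) :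
    (of fun i j => min (u i) (u j)).PosSemidef := by
  have hprod (i j : ι) (t : ℝ) :
      (Set.Ioc 0 (u i)).indicator 1 t * (Set.Ioc 0 (u j)).indicator 1 t
        = (Set.Ioc 0 (min (u i) (u j))).indicator (1 : ℝ → ℝ) t := by
    rw [← Pi.mul_apply, ← Set.inter_indicator_one, Set.Ioc_inter_Ioc, max_self]
  have hmin : (of fun i j => min (u i) (u j)) = of fun i j =>
      ∫ t, (Set.Ioc 0 (u i)).indicator 1 t * (Set.Ioc 0 (u j)).indicator 1 t := by
    ext i j
    simp only [of_apply, hprod, integral_indicator_one measurableSet_Ioc,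
      Real.volume_real_Ioc_of_le (le_min (hu i) (hu j)), sub_zero]
  rw [hmin]
  refine posSemidef_of_integral_mul _ _ fun i j => ?_
  simp only [hprod, integrable_indicator_iff measurableSet_Ioc]
  exact integrableOn_const measure_Ioc_lt_top.ne

theorem posSemidef_inv_add [Fintype ι] {a : ι → ℝ} (ha : ∀ i, 0 < a i) :
    (of fun i j => (a i + a j)⁻¹).PosSemidef := by
  have hprod (i j : ι) (t : ℝ) :
      Real.exp (-a i * t) * Real.exp (-a j * t) = Real.exp (-(a i + a j) * t) := by
    rw [← Real.exp_add]; ring_nf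
  have hneg (i j : ι) : -(a i + a j) < 0 := by linarith [ha i, ha j]
  have hinv : (of fun i j => (a i + a j)⁻¹) = of fun i j =>
      ∫ t in Set.Ioi 0, Real.exp (-a i * t) * Real.exp (-a j * t) := by
    ext i j
    simp only [of_apply, hprod, integral_exp_mul_Ioi (hneg i j), mul_zero, Real.exp_zero,
      neg_div_neg_eq, one_div]
  rw [hinv]
  exact posSemidef_of_integral_mul _ _ fun i j => by
    simpa only [hprod, IntegrableOn] using integrableOn_exp_mul_Ioi (hneg i j) 0

theorem PosSemidef.map_pow [Finite ι] {𝕜 : Type*} [RCLike 𝕜] {M : Matrix ι ι 𝕜}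
    (hM : M.PosSemidef) (k : ℕ) : (M.map (· ^ k)).PosSemidef := by
  induction k with
  | zero =>
    convert posSemidef_vecMulVec_self_star (1 : ι → 𝕜) using 1
    ext i j
    simp
  | succ k ih =>
    convert ih.hadamard hM using 1
    ext i j
    simp [pow_succ]

theorem posSemidef_tsum [Fintype ι] {κ : Type*} {M : κ → Matrix ι ι ℝ}
    (hM : ∀ k, (M k).PosSemidef) (hs : ∀ i j, Summable fun k => M k i j) :
    (of fun i j => ∑' k, M k i j).PosSemidef := by
  refine posSemidef_iff_sum_mul_mul_nonneg.2 ⟨IsHermitian.ext fun i j => ?_, fun c => ?_⟩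
  · simp only [of_apply, star_trivial]
    exact tsum_congr fun k => (hM k).isHermitian.apply i j
  · have hcs (i j : ι) : Summable fun k => c i * c j * M k i j := (hs i j).mul_left _
    calc 0 ≤ ∑' k, ∑ i, ∑ j, c i * c j * M k i j :=
          tsum_nonneg fun k => (posSemidef_iff_sum_mul_mul_nonneg.1 (hM k)).2 c
      _ = ∑ i, ∑ j, c i * c j * of (fun i j => ∑' k, M k i j) i j := by
        rw [Summable.tsum_finsetSum fun i _ => summable_sum fun j _ => hcs i j]
        refine Finset.sum_congr rfl fun i _ => ?_
        rw [Summable.tsum_finsetSum fun j _ => hcs i j]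
        exact Finset.sum_congr rfl fun j _ => tsum_mul_left

theorem PosSemidef.map_div_one_sub [Fintype ι] {M : Matrix ι ι ℝ} (hM : M.PosSemidef)
    (hM1 : ∀ i j, |M i j| < 1) : (M.map fun x => x / (1 - x)).PosSemidef := by
  have hgeom (x : ℝ) (hx : |x| < 1) : HasSum (fun k : ℕ => x ^ (k + 1)) (x / (1 - x)) := by
    simpa only [pow_succ', div_eq_mul_inv] using (hasSum_geometric_of_abs_lt_one hx).mul_left x
  convert posSemidef_tsum (fun k => hM.map_pow (k + 1))
    (fun i j => (hgeom _ (hM1 i j)).summable) using 1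
  ext i j
  exact (hgeom _ (hM1 i j)).tsum_eq.symm

theorem PosSemidef.sq_apply_le_mul {M : Matrix ι ι ℝ} (hM : M.PosSemidef) (i j : ι) :
    M i j ^ 2 ≤ M i i * M j j := by
  have hquad (x : ℝ) : 0 ≤ M i i * (x * x) + 2 * M i j * x + M j j := by
    have h := (posSemidef_iff_sum_mul_mul_nonneg.1 (hM.submatrix ![i, j])).2 ![x, 1]
    have hsymm : M j i = M i j := hM.isHermitian.apply i j
    simp only [Fin.sum_univ_two, submatrix_apply, cons_val_zero, cons_val_one, hsymm] at h
    linarith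
  have := discrim_le_zero hquad
  rw [discrim] at this
  linarith

theorem PosSemidef.two_mul_abs_apply_le {M : Matrix ι ι ℝ} (hM : M.PosSemidef) (i j : ι) :
    2 * |M i j| ≤ M i i + M j j := by
  have hi := hM.diag_nonneg (i := i)
  have hj := hM.diag_nonneg (i := j)
  have := hM.sq_apply_le_mul i j
  nlinarith [sq_abs (M i j), abs_nonneg (M i j), sq_nonneg (M i i - M j j)]

theorem PosSemidef.div_add_diag [Fintype ι] {M : Matrix ι ι ℝ} (hM : M.PosSemidef) :
    (of fun i j => M i j / (M i i + M j j)).PosSemidef := by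
  -- Rows with `M i i = 0` vanish, so their diagonal entry can be replaced by `1`, making the
  -- Cauchy matrix `(a i + a j)⁻¹` positive semidefinite without changing the quotients.
  set a : ι → ℝ := fun i => if M i i = 0 then 1 else M i i with ha
  have ha_pos (i : ι) : 0 < a i := by
    simp only [ha]
    split_ifs with h
    exacts [one_pos, lt_of_le_of_ne hM.diag_nonneg (Ne.symm h)]
  have hdiv : (of fun i j => M i j / (M i i + M j j)) = M ⊙ of fun i j => (a i + a j)⁻¹ := by
    ext i j
    have hsq := hM.sq_apply_le_mul i j
    simp only [of_apply, hadamard_apply, div_eq_mul_inv, ha]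
    split_ifs <;> simp_all
  rw [hdiv]
  exact hM.hadamard (posSemidef_inv_add ha_pos)

noncomputable def tanimoto (M : Matrix ι ι ℝ) : Matrix ι ι ℝ :=
  of fun i j => if 0 < M i i + M j j - M i j then M i j / (M i i + M j j - M i j) else 1

theorem PosSemidef.tanimoto_eq {M : Matrix ι ι ℝ} (hM : M.PosSemidef) :
    M.tanimoto = (of fun i j => M i j / (M i i + M j j)).map (fun x => x / (1 - x))
      + vecMulVec (fun i => if M i i = 0 then 1 else 0) (fun i => if M i i = 0 then 1 else 0) := by
  ext i j
  have hi : 0 ≤ M i i := hM.diag_nonneg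
  have hj : 0 ≤ M j j := hM.diag_nonneg
  have habs := hM.two_mul_abs_apply_le i j
  simp only [tanimoto, of_apply, add_apply, map_apply, vecMulVec_apply]
  by_cases h : 0 < M i i + M j j - M i j
  · have hsum : 0 < M i i + M j j := by linarith [neg_abs_le (M i j)]
    have hz : (if M i i = 0 then (1 : ℝ) else 0) * (if M j j = 0 then 1 else 0) = 0 := by
      split_ifs <;> simp_all
    rw [if_pos h, hz, add_zero]
    field_simp
  · have hii : M i i = 0 := by linarith [le_abs_self (M i j)]
    have hjj : M j j = 0 := by linarith [le_abs_self (M i j)]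
    have hij : M i j = 0 := abs_nonpos_iff.1 (by linarith)
    simp [hii, hjj, hij]

theorem PosSemidef.tanimoto [Fintype ι] {M : Matrix ι ι ℝ} (hM : M.PosSemidef) :
    M.tanimoto.PosSemidef := by
  rw [hM.tanimoto_eq]
  refine .add (hM.div_add_diag.map_div_one_sub fun i j => ?_) ?_
  · calc |M i j / (M i i + M j j)| ≤ 1 / 2 := by
          rw [abs_div, abs_of_nonneg (add_nonneg hM.diag_nonneg hM.diag_nonneg)]
          exact div_le_of_le_mul₀ (add_nonneg hM.diag_nonneg hM.diag_nonneg) (by norm_num)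
            (by linarith [hM.two_mul_abs_apply_le i j])
      _ < 1 := by norm_num
  · simpa using posSemidef_vecMulVec_self_star (fun i => if M i i = 0 then (1 : ℝ) else 0)

end Matrix

open Matrix

theorem ite_mul_pos_min_abs (a b : ℝ) :
    (if 0 < a * b then min |a| |b| else 0)
      = min (max a 0) (max b 0) + min (max (-a) 0) (max (-b) 0) := by
  rcases lt_trichotomy a 0 with ha | rfl | ha <;> rcases lt_trichotomy b 0 with hb | rfl | hb
  all_goals simp [*, abs_of_neg, abs_of_pos, le_of_lt, mul_pos_of_neg_of_neg]

theorem Npeak_eq_sum_min {n : ℕ} (A B : Fin n → ℝ) :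
    Npeak A B = ∑ k, (min (max (A k) 0) (max (B k) 0) + min (max (-A k) 0) (max (-B k) 0)) := by
  rw [Npeak, Finset.sum_filter]
  exact Finset.sum_congr rfl fun k _ => ite_mul_pos_min_abs (A k) (B k)

theorem Upeak_eq {n : ℕ} (A B : Fin n → ℝ) :
    Upeak A B = Npeak A A + Npeak B B - Npeak A B := by
  simp only [Upeak, Npeak_eq_sum_min, min_self, ← Finset.sum_add_distrib,
    ← Finset.sum_sub_distrib]
  refine Finset.sum_congr rfl fun k _ => ?_
  linarith [max_add_min (max (A k) 0) (max (B k) 0), max_add_min (max (-A k) 0) (max (-B k) 0)]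

theorem Jpeak_eq_tanimoto {ι : Type*} {n : ℕ} (A : ι → Fin n → ℝ) (i j : ι) :
    Jpeak (A i) (A j) = (of fun i j => Npeak (A i) (A j)).tanimoto i j := by
  rw [Jpeak, Upeak_eq]
  rfl

theorem posSemidef_Npeak {ι : Type*} [Fintype ι] {n : ℕ} (A : ι → Fin n → ℝ) :
    (of fun i j => Npeak (A i) (A j)).PosSemidef := by
  have hsplit : (of fun i j => Npeak (A i) (A j)) = ∑ k,
      ((of fun i j => min (max (A i k) 0) (max (A j k) 0))
        + of fun i j => min (max (-A i k) 0) (max (-A j k) 0)) := by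
    ext i j
    simp only [Npeak_eq_sum_min, Matrix.sum_apply, Matrix.add_apply, of_apply]
  rw [hsplit]
  exact posSemidef_sum _ fun k _ =>
    (posSemidef_min fun i => le_max_right _ _).add (posSemidef_min fun i => le_max_right _ _)

/-- The peak-to-peak distance is of negative type: for any `A₁,…,A_m ∈ ℝⁿ` and
real coefficients `c₁,…,c_m` with `Σᵢ cᵢ = 0`, one has
`Σᵢ Σⱼ cᵢ cⱼ d_peak(Aᵢ,Aⱼ) ≤ 0`. -/
theorem dpeak_negative_type {n m : ℕ} (A : Fin m → Fin n → ℝ) (c : Fin m → ℝ)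
    (hc : ∑ i, c i = 0) :
    ∑ i : Fin m, ∑ j : Fin m, c i * c j * dpeak (A i) (A j) ≤ 0 := by
  have hJ := (posSemidef_iff_sum_mul_mul_nonneg.1 (posSemidef_Npeak A).tanimoto).2 c
  have hsplit : ∑ i, ∑ j, c i * c j * dpeak (A i) (A j) = (∑ i, c i) ^ 2
      - ∑ i, ∑ j, c i * c j * (of fun i j => Npeak (A i) (A j)).tanimoto i j := by
    simp only [dpeak, Jpeak_eq_tanimoto, mul_sub, mul_one, Finset.sum_sub_distrib, sq,
      Finset.sum_mul_sum]
  rw [hsplit, hc]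
  linarith
end

section
/- The Cartesian sign-split embedding ψ_C : ℂⁿ → ℝ₊^{4n} is injective, and the induced Tanimoto distance d_{ψC}(Z,W) = d_Tan(ψ_C(Z), ψ_C(W)) is a metric on ℂⁿ: for all Z, W, V ∈ ℂⁿ, d_{ψC}(Z,W) ≥ 0 with d_{ψC}(Z,W) = 0 if and only if Z = W, d_{ψC}(Z,W) = d_{ψC}(W,Z), and d_{ψC}(Z,V) ≤ d_{ψC}(Z,W) + d_{ψC}(W,V). -/
open Finset

/-- Cartesian sign-split embedding `ψ_C : ℂⁿ → ℝ₊^{4n}`: each complex coordinate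
`zᵢ = aᵢ + i·bᵢ` produces the four nonnegative components `(aᵢ⁺, aᵢ⁻, bᵢ⁺, bᵢ⁻)`,
indexed here by `Fin n × Fin 4`. -/
noncomputable def psiC {n : ℕ} (Z : Fin n → ℂ) : Fin n × Fin 4 → ℝ :=
  fun p =>
    if p.2 = 0 then max (Z p.1).re 0
    else if p.2 = 1 then max (-(Z p.1).re) 0
    else if p.2 = 2 then max (Z p.1).im 0
    else max (-(Z p.1).im) 0

/-- Tanimoto similarity on nonnegative vectors. -/
noncomputable def JTan {ι : Type*} [Fintype ι] (u v : ι → ℝ) : ℝ :=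
  if 0 < ∑ j, max (u j) (v j) then (∑ j, min (u j) (v j)) / (∑ j, max (u j) (v j)) else 1

/-- Tanimoto distance `d_Tan = 1 − J_Tan`. -/
noncomputable def dTan {ι : Type*} [Fintype ι] (u v : ι → ℝ) : ℝ := 1 - JTan u v

/-- Induced Tanimoto distance on ℂⁿ via the Cartesian sign-split embedding. -/
noncomputable def dPsiC {n : ℕ} (Z W : Fin n → ℂ) : ℝ := dTan (psiC Z) (psiC W)

/-!
On nonnegative vectors the Tanimoto distance is twice the Steinhaus transform of the `ℓ¹`
metric with base point `0`: since `2 max(a, b) = a + b + |a - b|` and `2 min(a, b) = a + b - |a - b|`,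
`d_Tan(u, v) = 2‖u - v‖₁ / (‖u‖₁ + ‖v‖₁ + ‖u - v‖₁)`. The Steinhaus transform
`d(x, y) / (d(x, a) + d(y, a) + d(x, y))` of any metric is again a metric, because `t ↦ t / (c + t)`
is monotone. Since `ψ_C` takes nonnegative values and is injective (`a = a⁺ - a⁻`), all of this
transfers to `ℂⁿ`.
-/

/-- The Steinhaus transform of `dist` with base point `a`. -/
noncomputable def steinhausDist {α : Type*} [PseudoMetricSpace α] (a x y : α) : ℝ :=
  dist x y / (dist x a + dist y a + dist x y)

lemma div_add_self_le_div_add_self {c s t : ℝ} (hc : 0 ≤ c) (hs : 0 ≤ s) (hst : s ≤ t) :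
    s / (c + s) ≤ t / (c + t) := by
  rcases (add_nonneg hc hs).eq_or_lt with h | h
  · rw [← h, div_zero]
    exact div_nonneg (hs.trans hst) (by linarith)
  · rw [div_le_div_iff₀ h (by linarith)]
    nlinarith

lemma div_le_div_of_nonneg_left_of_le {a b c : ℝ} (ha : 0 ≤ a) (hac : a ≤ c) (hcb : c ≤ b) :
    a / b ≤ a / c := by
  rcases ha.eq_or_lt with h | h
  · simp [← h]
  · exact div_le_div_of_nonneg_left ha (h.trans_le hac) hcb

section Steinhaus

variable {α : Type*} [PseudoMetricSpace α] (a : α)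

lemma steinhausDist_nonneg (x y : α) : 0 ≤ steinhausDist a x y := by
  unfold steinhausDist
  positivity

lemma steinhausDist_comm (x y : α) : steinhausDist a x y = steinhausDist a y x := by
  simp only [steinhausDist, dist_comm x y, add_comm (dist x a)]

theorem steinhausDist_triangle (x y z : α) :
    steinhausDist a x z ≤ steinhausDist a x y + steinhausDist a y z := by
  have hxy : dist y a ≤ dist x y + dist x a := dist_triangle_left y a x
  have hyz : dist y a ≤ dist y z + dist z a := dist_triangle y z a
  simp only [steinhausDist]
  calc dist x z / (dist x a + dist z a + dist x z)
      ≤ (dist x y + dist y z) / (dist x a + dist z a + (dist x y + dist y z)) :=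
        div_add_self_le_div_add_self (by positivity) dist_nonneg (dist_triangle x y z)
    _ = dist x y / (dist x a + dist z a + (dist x y + dist y z)) +
          dist y z / (dist x a + dist z a + (dist x y + dist y z)) := add_div _ _ _
    _ ≤ dist x y / (dist x a + dist y a + dist x y) +
          dist y z / (dist y a + dist z a + dist y z) := by
        gcongr ?_ + ?_
        · exact div_le_div_of_nonneg_left_of_le dist_nonneg
            (le_add_of_nonneg_left (by positivity)) (by linarith)
        · exact div_le_div_of_nonneg_left_of_le dist_nonneg
            (le_add_of_nonneg_left (by positivity)) (by linarith)

end Steinhaus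

lemma steinhausDist_eq_zero_iff {α : Type*} [MetricSpace α] {a x y : α} :
    steinhausDist a x y = 0 ↔ x = y := by
  rw [steinhausDist, div_eq_zero_iff, dist_eq_zero, or_iff_left_iff_imp]
  intro h
  exact dist_le_zero.1 (by linarith [dist_nonneg (x := x) (y := a), dist_nonneg (x := y) (y := a)])

section Tanimoto

variable {ι : Type*} [Fintype ι]

lemma two_mul_sum_max (u v : ι → ℝ) :
    2 * ∑ j, max (u j) (v j) = ∑ j, u j + ∑ j, v j + ∑ j, |u j - v j| := by
  rw [mul_sum, ← sum_add_distrib, ← sum_add_distrib]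
  exact sum_congr rfl fun j _ => by
    rw [abs_sub_comm, ← two_nsmul_sup_eq_add_add_abs_sub, two_nsmul, two_mul]

lemma sum_min_eq_sum_max_sub (u v : ι → ℝ) :
    ∑ j, min (u j) (v j) = ∑ j, max (u j) (v j) - ∑ j, |u j - v j| := by
  rw [← sum_sub_distrib]
  exact sum_congr rfl fun j _ => by rw [← max_sub_min_eq_abs']; ring

lemma dist_toLp_one (u v : ι → ℝ) :
    dist (WithLp.toLp 1 u : PiLp 1 fun _ : ι => ℝ) (WithLp.toLp 1 v) = ∑ j, |u j - v j| := by
  simp [PiLp.dist_eq_of_L1, Real.dist_eq]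

lemma dist_toLp_one_zero {u : ι → ℝ} (hu : 0 ≤ u) :
    dist (WithLp.toLp 1 u : PiLp 1 fun _ : ι => ℝ) (WithLp.toLp 1 0) = ∑ j, u j := by
  rw [dist_toLp_one]
  exact sum_congr rfl fun j _ => by rw [Pi.zero_apply, sub_zero, abs_of_nonneg (hu j)]

theorem dTan_eq_two_mul_steinhausDist {u v : ι → ℝ} (hu : 0 ≤ u) (hv : 0 ≤ v) :
    dTan u v = 2 * steinhausDist (WithLp.toLp 1 0 : PiLp 1 fun _ : ι => ℝ)
      (WithLp.toLp 1 u) (WithLp.toLp 1 v) := by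
  unfold steinhausDist dTan JTan
  rw [dist_toLp_one_zero hu, dist_toLp_one_zero hv, dist_toLp_one, ← two_mul_sum_max,
    sum_min_eq_sum_max_sub]
  split_ifs with h
  · field_simp
    ring
  · have : ∑ j, max (u j) (v j) = 0 := le_antisymm (not_lt.1 h)
      (sum_nonneg fun j _ => (hu j).trans (le_max_left _ _))
    simp [this]

end Tanimoto

lemma psiC_nonneg {n : ℕ} (Z : Fin n → ℂ) : 0 ≤ psiC Z := fun p => by
  unfold psiC
  split_ifs <;> exact le_max_right _ _

lemma psiC_sub_psiC_re {n : ℕ} (Z : Fin n → ℂ) (i : Fin n) :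
    psiC Z (i, 0) - psiC Z (i, 1) = (Z i).re := by
  simp [psiC, max_zero_sub_max_neg_zero_eq_self]

lemma psiC_sub_psiC_im {n : ℕ} (Z : Fin n → ℂ) (i : Fin n) :
    psiC Z (i, 2) - psiC Z (i, 3) = (Z i).im := by
  simp [psiC, max_zero_sub_max_neg_zero_eq_self]

lemma psiC_injective {n : ℕ} : Function.Injective (psiC (n := n)) := fun Z W h =>
  funext fun i => Complex.ext (by rw [← psiC_sub_psiC_re, ← psiC_sub_psiC_re, h])
    (by rw [← psiC_sub_psiC_im, ← psiC_sub_psiC_im, h])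

/-- The Cartesian sign-split embedding `ψ_C` is injective, and the induced Tanimoto
distance `d_{ψC}(Z,W) = d_Tan(ψ_C(Z), ψ_C(W))` is a metric on `ℂⁿ`: nonnegativity,
identity of indiscernibles, symmetry, and the triangle inequality. -/
theorem psiC_injective_and_metric {n : ℕ} :
    Function.Injective (psiC (n := n)) ∧
    ∀ Z W V : Fin n → ℂ,
      0 ≤ dPsiC Z W ∧ (dPsiC Z W = 0 ↔ Z = W) ∧ dPsiC Z W = dPsiC W Z ∧
        dPsiC Z V ≤ dPsiC Z W + dPsiC W V := by
  refine ⟨psiC_injective, fun Z W V => ?_⟩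
  simp only [dPsiC, dTan_eq_two_mul_steinhausDist (psiC_nonneg _) (psiC_nonneg _)]
  set a : PiLp 1 (fun _ : Fin n × Fin 4 => ℝ) := WithLp.toLp 1 0
  refine ⟨mul_nonneg zero_le_two (steinhausDist_nonneg a _ _), ?_,
    by rw [steinhausDist_comm], ?_⟩
  · rw [mul_eq_zero, or_iff_right two_ne_zero, steinhausDist_eq_zero_iff,
      (WithLp.toLp_injective 1).eq_iff, psiC_injective.eq_iff]
  · linarith [steinhausDist_triangle a (WithLp.toLp 1 (psiC Z)) (WithLp.toLp 1 (psiC W))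
      (WithLp.toLp 1 (psiC V))]
end
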